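/- Let P, Q : ℤ × ℝ → ℝ be differentiable in t with P(n,t) ≠ 0 for all n, t, satisfying the Ablowitz–Ladik equation in the variables P, Q: ∂ₜP(n) = P(n)(Q(n+1) − Q(n)) + Q(n+1)/P(n+1) − Q(n)/P(n−1) and ∂ₜQ(n) = Q(n)(Q(n+1) − Q(n−1) − P(n) + P(n−1)) + Q(n)/P(n) − Q(n)/P(n−1). Then the functions P̂(n,t) = 1/P(−n,t) and Q̂(n,t) = Q(−n+1,t)/(P(−n,t)P(−n+1,t)) satisfy the same system of equations; i.e., this is a Bäcklund transformation of the Ablowitz–Ladik equation. -/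

import Mathlib

/-! The transformed fields are rational in `P` and `Q` at the sites `-n - 1, …, -n + 2`, so the
chain rule computes their time derivatives from the Ablowitz–Ladik equations, and the theorem
reduces to two rational identities between these derivatives and the right-hand sides of the
equations evaluated at `(P̂, Q̂)`. -/

section AblowitzLadik

variable {K : Type*} [Field K]

-- The right-hand sides of the Ablowitz–Ladik equations for `∂ₜP` and `∂ₜQ` at site `n`,
-- evaluated on the fields `p, q` at a fixed time.
def alFlowP (p q : ℤ → K) (n : ℤ) : K :=
  p n * (q (n + 1) - q n) + q (n + 1) / p (n + 1) - q n / p (n - 1)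

def alFlowQ (p q : ℤ → K) (n : ℤ) : K :=
  q n * (q (n + 1) - q (n - 1) - p n + p (n - 1)) + q n / p n - q n / p (n - 1)

def backlundP (p : ℤ → K) (n : ℤ) : K := (p (-n))⁻¹

def backlundQ (p q : ℤ → K) (n : ℤ) : K := q (-n + 1) / (p (-n) * p (-n + 1))

theorem alFlowP_backlund {p : ℤ → K} (q : ℤ → K) (hp : ∀ n, p n ≠ 0) (n : ℤ) :
    alFlowP (backlundP p) (backlundQ p q) n = -alFlowP p q (-n) / p (-n) ^ 2 := by
  have h₀ := hp (-n)
  have h₁ := hp (-n + 1)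
  have h₂ := hp (-n - 1)
  simp only [alFlowP, backlundP, backlundQ, show -(n + 1) = -n - 1 by ring,
    show -(n - 1) = -n + 1 by ring, show -n - 1 + 1 = -n by ring]
  field_simp
  ring

theorem alFlowQ_backlund {p : ℤ → K} (q : ℤ → K) (hp : ∀ n, p n ≠ 0) (n : ℤ) :
    alFlowQ (backlundP p) (backlundQ p q) n =
      (alFlowQ p q (-n + 1) * (p (-n) * p (-n + 1))
        - q (-n + 1) * (alFlowP p q (-n) * p (-n + 1) + p (-n) * alFlowP p q (-n + 1)))
        / (p (-n) * p (-n + 1)) ^ 2 := by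
  have h₀ := hp (-n)
  have h₁ := hp (-n + 1)
  have h₂ := hp (-n - 1)
  have h₃ := hp (-n + 2)
  simp only [alFlowP, alFlowQ, backlundP, backlundQ, show -(n + 1) = -n - 1 by ring,
    show -(n - 1) = -n + 1 by ring, show -n - 1 + 1 = -n by ring, show -n + 1 - 1 = -n by ring,
    show -n + 1 + 1 = -n + 2 by ring]
  field_simp
  ring

end AblowitzLadik

section Derivatives

variable {𝕜 : Type*} [NontriviallyNormedField 𝕜] {P Q : ℤ → 𝕜 → 𝕜} {t : 𝕜}

theorem hasDerivAt_backlundP (hP : ∀ n, P n t ≠ 0) (n : ℤ)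
    (hflowP : HasDerivAt (P (-n)) (alFlowP (P · t) (Q · t) (-n)) t) :
    HasDerivAt (fun s ↦ backlundP (P · s) n)
      (alFlowP (backlundP (P · t)) (backlundQ (P · t) (Q · t)) n) t := by
  rw [alFlowP_backlund _ hP]
  exact hflowP.inv (hP (-n))

theorem hasDerivAt_backlundQ (hP : ∀ n, P n t ≠ 0) (n : ℤ)
    (hflowP₀ : HasDerivAt (P (-n)) (alFlowP (P · t) (Q · t) (-n)) t)
    (hflowP₁ : HasDerivAt (P (-n + 1)) (alFlowP (P · t) (Q · t) (-n + 1)) t)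
    (hflowQ₁ : HasDerivAt (Q (-n + 1)) (alFlowQ (P · t) (Q · t) (-n + 1)) t) :
    HasDerivAt (fun s ↦ backlundQ (P · s) (Q · s) n)
      (alFlowQ (backlundP (P · t)) (backlundQ (P · t) (Q · t)) n) t := by
  rw [alFlowQ_backlund _ hP]
  exact hflowQ₁.div (hflowP₀.mul hflowP₁) (mul_ne_zero (hP (-n)) (hP (-n + 1)))

end Derivatives

theorem ablowitz_ladik_backlund_transformation
    (P Q : ℤ → ℝ → ℝ)
    (hP : ∀ (n : ℤ) (t : ℝ), P n t ≠ 0)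
    (hflowP : ∀ (n : ℤ) (t : ℝ),
      HasDerivAt (P n)
        (P n t * (Q (n + 1) t - Q n t) + Q (n + 1) t / P (n + 1) t - Q n t / P (n - 1) t) t)
    (hflowQ : ∀ (n : ℤ) (t : ℝ),
      HasDerivAt (Q n)
        (Q n t * (Q (n + 1) t - Q (n - 1) t - P n t + P (n - 1) t)
          + Q n t / P n t - Q n t / P (n - 1) t) t)
    (Phat Qhat : ℤ → ℝ → ℝ)
    (hPhat : ∀ (n : ℤ) (t : ℝ), Phat n t = 1 / P (-n) t)
    (hQhat : ∀ (n : ℤ) (t : ℝ), Qhat n t = Q (-n + 1) t / (P (-n) t * P (-n + 1) t)) :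
    ∀ (n : ℤ) (t : ℝ),
      HasDerivAt (Phat n)
        (Phat n t * (Qhat (n + 1) t - Qhat n t)
          + Qhat (n + 1) t / Phat (n + 1) t - Qhat n t / Phat (n - 1) t) t ∧
      HasDerivAt (Qhat n)
        (Qhat n t * (Qhat (n + 1) t - Qhat (n - 1) t - Phat n t + Phat (n - 1) t)
          + Qhat n t / Phat n t - Qhat n t / Phat (n - 1) t) t := by
  obtain rfl : Phat = fun n s ↦ backlundP (P · s) n := by
    funext n s
    rw [hPhat, one_div, backlundP]
  obtain rfl : Qhat = fun n s ↦ backlundQ (P · s) (Q · s) n := by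
    funext n s
    rw [hQhat, backlundQ]
  intro n t
  exact ⟨hasDerivAt_backlundP (hP · t) n (hflowP _ t),
    hasDerivAt_backlundQ (hP · t) n (hflowP _ t) (hflowP _ t) (hflowQ _ t)⟩
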